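/- Suppose x_N = M. Then the partition function W_{M,N}, regarded as a function of v_M, satisfies the quasi-periodicities W_{M,N}(u₁,…,u_N|v₁,…,v_{M-1}, v_M + 2K₁/λ|x₁,…,x_N|a₁₂) = (-1)^N W_{M,N}(u₁,…,u_N|v₁,…,v_M|x₁,…,x_N|a₁₂) and W_{M,N}(u₁,…,u_N|v₁,…,v_{M-1}, v_M + 2iK₂/λ|x₁,…,x_N|a₁₂) = (-q^{-1})^N exp( -(iπλ/K₁)( N v_M − Σ_{j=1}^N u_j + a₁₂ + N + M − 2 ) ) W_{M,N}(u₁,…,u_N|v₁,…,v_M|x₁,…,x_N|a₁₂). Consequently, as a function of y_M = (λ/(2K₁)) v_M it is an elliptic polynomial in Θ_N(χ) with τ = iK₂/K₁, χ(1) = (-1)^N and χ(τ) = (-1)^N exp( (πλτ/K₂)( Σ_{j=1}^N u_j − a₁₂ − N − M + 2 ) ). -/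

import Mathlib

open Complex

noncomputable section

/-- The half period magnitude `K₁` for elliptic nome `q`. -/
def Kone (q : ℝ) : ℝ :=
  Real.pi / 2 * ∏' n : ℕ,
    ((1 + q ^ (2 * n + 1)) / (1 - q ^ (2 * n + 1)) *
      ((1 - q ^ (2 * n + 2)) / (1 + q ^ (2 * n + 2)))) ^ 2

/-- The half period magnitude `K₂` for elliptic nome `q`. -/
def Ktwo (q : ℝ) : ℝ := -(Kone q / Real.pi) * Real.log q

/-- The elliptic theta function `H`. -/
def theta (q : ℝ) (u : ℂ) : ℂ :=
  2 * (q : ℂ) ^ (1 / 4 : ℂ) * Complex.sin (Real.pi * u / (2 * (Kone q : ℂ))) *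
    ∏' n : ℕ,
      ((1 - 2 * (q : ℂ) ^ (2 * n + 2) * Complex.cos (Real.pi * u / (Kone q : ℂ)) +
          (q : ℂ) ^ (4 * n + 4)) * (1 - (q : ℂ) ^ (2 * n + 2)))

/-- The bracket `[u] = H(λu)`. -/
def brak (q : ℝ) (lam : ℂ) (u : ℂ) : ℂ := theta q (lam * u)

/-- Unit vector ê₁. -/
def e1 : ℤ × ℤ := (1, 0)

/-- Unit vector ê₂. -/
def e2 : ℤ × ℤ := (0, 1)

/-- The scalar `a₁₂ = a₁ + a₂ + ω₁₂` attached to a state vector. -/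
def aSc (ω12 : ℂ) (a : ℤ × ℤ) : ℂ := (a.1 : ℂ) + (a.2 : ℂ) + ω12

/-- The face weights of the Deguchi-Martin model. -/
def faceW (q : ℝ) (lam ω12 : ℂ) (a b c d : ℤ × ℤ) (u v : ℂ) : ℂ :=
  if b = a + e1 ∧ c = a + e1 ∧ d = a + e1 + e1 then
    brak q lam (1 + (u - v)) / brak q lam 1
  else if b = a + e2 ∧ c = a + e2 ∧ d = a + e2 + e2 then
    brak q lam (1 - (u - v)) / brak q lam 1
  else if b = a + e2 ∧ c = a + e1 ∧ d = a + e1 + e2 then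
    brak q lam (u - v) * brak q lam (aSc ω12 a - 1) / (brak q lam 1 * brak q lam (aSc ω12 a))
  else if b = a + e1 ∧ c = a + e2 ∧ d = a + e1 + e2 then
    brak q lam (u - v) * brak q lam (-aSc ω12 a - 1) / (brak q lam 1 * brak q lam (-aSc ω12 a))
  else if b = a + e1 ∧ c = a + e1 ∧ d = a + e1 + e2 then
    brak q lam (aSc ω12 a - (u - v)) / brak q lam (aSc ω12 a)
  else if b = a + e2 ∧ c = a + e2 ∧ d = a + e1 + e2 then
    brak q lam (-aSc ω12 a - (u - v)) / brak q lam (-aSc ω12 a)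
  else 0

/-- Number of the integers `x₁ < ⋯ < x_N` that are `≤ k`. -/
def btmCount (N : ℕ) (x : ℕ → ℕ) (k : ℕ) : ℕ :=
  ((Finset.Icc 1 N).filter fun j => x j ≤ k).card

open scoped Classical in
/-- The partition function `W_{M,N}(u₁,…,u_N|v₁,…,v_M|x₁,…,x_N|a₁₂)` of the
Deguchi-Martin model: the sum over all state-vector configurations of the
`N`-row, `M`-column lattice with the prescribed boundary of the product of all
`M·N` face weights. -/
def partW (q : ℝ) (lam ω12 : ℂ) (M N : ℕ) (u v : ℕ → ℂ) (x : ℕ → ℕ)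
    (a : ℤ × ℤ) : ℂ :=
  ∑' s : Fin (N + 1) × Fin (M + 1) → ℤ × ℤ,
    if (∀ k : Fin (M + 1), s (0, k) = a + ((k : ℕ) : ℤ) • e1) ∧
       (∀ i : Fin (N + 1), s (i, 0) = a + ((i : ℕ) : ℤ) • e1) ∧
       (∀ i : Fin (N + 1), s (i, Fin.last M) = a + (M : ℤ) • e1 + ((i : ℕ) : ℤ) • e2) ∧
       (∀ k : Fin (M + 1), s (Fin.last N, k) =
          a + ((N : ℤ) + ((k : ℕ) : ℤ) - (btmCount N x (k : ℕ) : ℤ)) • e1 +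
            (btmCount N x (k : ℕ) : ℤ) • e2)
    then
      ∏ i : Fin N, ∏ k : Fin M,
        faceW q lam ω12 (s (i.castSucc, k.castSucc)) (s (i.castSucc, k.succ))
          (s (i.succ, k.castSucc)) (s (i.succ, k.succ)) (u (N - (i : ℕ))) (v ((k : ℕ) + 1))
    else 0

/-!
In the variable `E = exp (π i u / (2 K₁))` the theta function is `(E⁻¹ - E)` times a product
of `q`-Pochhammer symbols, and the quasi-periods `2 K₁` and `2 i K₂` act by `E ↦ -E` and
`E ↦ q E`. Hence `[s + 2K₁/λ] = -[s]` and `[s + 2iK₂/λ] = -q⁻¹ exp (-iπλ s / K₁) [s]`.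

Only the faces of the last column depend on `v_M`. Their right edges are `ê₂`-steps, so each of
their weights is a constant multiple of `[v_M - u_j + c]` for a shift `c` read off the face. The
first shift therefore multiplies the weight of every configuration by `(-1)^N`, the second one by
`(-q⁻¹)^N exp (-(iπλ/K₁) (N v_M - Σ u_j + Σ c))`. As `x_N = M`, the left edge of the last
column contains exactly one `ê₁`-step, which forces `Σ c = a₁₂ + N + M - 2` for every
configuration of nonzero weight. Finally only finitely many configurations have nonzero weight,
so `W_{M,N}` is an entire function of `v_M`.
-/

def qPochhammer (a p : ℂ) : ℂ := ∏' n : ℕ, (1 - a * p ^ n)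

section qPochhammer

variable {p : ℂ}

lemma multipliable_one_sub_mul_pow (hp : ‖p‖ < 1) (a : ℂ) :
    Multipliable fun n : ℕ => 1 - a * p ^ n := by
  simpa [sub_eq_add_neg] using multipliable_one_add_of_summable (f := fun n => -(a * p ^ n))
    (by simpa [norm_mul, norm_pow] using
      (summable_geometric_of_lt_one (norm_nonneg _) hp).mul_left ‖a‖)

lemma qPochhammer_eq_one_sub_mul (hp : ‖p‖ < 1) (a : ℂ) :
    qPochhammer a p = (1 - a) * qPochhammer (a * p) p := by
  have hsucc : (fun n : ℕ => 1 - a * p ^ (n + 1)) = fun n => 1 - a * p * p ^ n := by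
    ext n; ring
  rw [qPochhammer, tprod_eq_zero_mul' (by rw [hsucc]; exact multipliable_one_sub_mul_pow hp _),
    hsucc, pow_zero, mul_one, qPochhammer]

lemma differentiable_qPochhammer (hp : ‖p‖ < 1) :
    Differentiable ℂ fun a => qPochhammer a p := by
  have hball : ∀ R : ℝ, DifferentiableOn ℂ (fun a => qPochhammer a p) (Metric.ball 0 R) := by
    intro R
    have hprod := Summable.hasProdLocallyUniformlyOn_nat_one_add (f := fun n a => -(a * p ^ n))
      Metric.isOpen_ball ((summable_geometric_of_lt_one (norm_nonneg _) hp).mul_left R)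
      (.of_forall fun n a ha => by
        rw [norm_neg, norm_mul, norm_pow]
        exact mul_le_mul_of_nonneg_right (mem_ball_zero_iff.mp ha).le (by positivity))
      (fun n => by fun_prop)
    simp_rw [← sub_eq_add_neg] at hprod
    exact hprod.differentiableOn (.of_forall fun _ => by fun_prop) Metric.isOpen_ball
  exact fun a => (hball (‖a‖ + 1)).differentiableAt (Metric.isOpen_ball.mem_nhds (by simp))

end qPochhammer

def thetaProd (q : ℝ) (E : ℂ) : ℂ :=
  (q : ℂ) ^ (1 / 4 : ℂ) * ((E⁻¹ - E) * I) *
    (qPochhammer ((q : ℂ) ^ 2 * E ^ 2) ((q : ℂ) ^ 2) *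
      qPochhammer ((q : ℂ) ^ 2 * (E ^ 2)⁻¹) ((q : ℂ) ^ 2) *
      qPochhammer ((q : ℂ) ^ 2) ((q : ℂ) ^ 2))

section theta

variable {q : ℝ}

lemma norm_ofReal_sq_lt_one (hq0 : 0 < q) (hq1 : q < 1) : ‖(q : ℂ) ^ 2‖ < 1 := by
  rw [norm_pow, Complex.norm_real, Real.norm_of_nonneg hq0.le]
  exact pow_lt_one₀ hq0.le hq1 two_ne_zero

lemma theta_eq_thetaProd (hq0 : 0 < q) (hq1 : q < 1) (u : ℂ) :
    theta q u = thetaProd q (exp (Real.pi * u / (2 * Kone q) * I)) := by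
  set z := (Real.pi : ℂ) * u / (2 * Kone q)
  set E := exp (z * I)
  have hE : E ≠ 0 := exp_ne_zero _
  have hp := norm_ofReal_sq_lt_one hq0 hq1
  have hsin : sin z = (E⁻¹ - E) * I / 2 := by
    rw [← exp_neg, ← neg_mul]; linear_combination two_sin z / 2
  have hE2 : exp (2 * z * I) = E ^ 2 := by
    rw [← exp_nat_mul]; push_cast; ring_nf
  have hcos : cos (Real.pi * u / Kone q) = (E ^ 2 + (E ^ 2)⁻¹) / 2 := by
    have h := two_cos (2 * z)
    rw [neg_mul, exp_neg, hE2] at h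
    rw [show (Real.pi : ℂ) * u / Kone q = 2 * z by ring]
    linear_combination h / 2
  have hfactor : ∀ n : ℕ,
      (1 - 2 * (q : ℂ) ^ (2 * n + 2) * ((E ^ 2 + (E ^ 2)⁻¹) / 2) + (q : ℂ) ^ (4 * n + 4)) *
          (1 - (q : ℂ) ^ (2 * n + 2)) =
        (1 - (q : ℂ) ^ 2 * E ^ 2 * ((q : ℂ) ^ 2) ^ n) *
          (1 - (q : ℂ) ^ 2 * (E ^ 2)⁻¹ * ((q : ℂ) ^ 2) ^ n) *
          (1 - (q : ℂ) ^ 2 * ((q : ℂ) ^ 2) ^ n) := by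
    intro n
    field_simp
    ring
  rw [theta, hsin, hcos, tprod_congr hfactor,
    Multipliable.tprod_mul
      ((multipliable_one_sub_mul_pow hp _).mul (multipliable_one_sub_mul_pow hp _))
      (multipliable_one_sub_mul_pow hp _),
    Multipliable.tprod_mul (multipliable_one_sub_mul_pow hp _) (multipliable_one_sub_mul_pow hp _)]
  simp only [thetaProd, qPochhammer]
  ring

lemma thetaProd_neg (E : ℂ) : thetaProd q (-E) = -thetaProd q E := by
  simp only [thetaProd, neg_sq, inv_neg]
  ring

lemma thetaProd_ofReal_mul (hq0 : 0 < q) (hq1 : q < 1) {E : ℂ} (hE : E ≠ 0) :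
    thetaProd q (q * E) = -(q : ℂ)⁻¹ * (E ^ 2)⁻¹ * thetaProd q E := by
  have hp := norm_ofReal_sq_lt_one hq0 hq1
  have hq : (q : ℂ) ≠ 0 := by exact_mod_cast hq0.ne'
  have h₁ := qPochhammer_eq_one_sub_mul hp ((q : ℂ) ^ 2 * E ^ 2)
  have h₂ := qPochhammer_eq_one_sub_mul hp (E ^ 2)⁻¹
  simp only [thetaProd]
  rw [show (q : ℂ) ^ 2 * (q * E) ^ 2 = (q : ℂ) ^ 2 * E ^ 2 * (q : ℂ) ^ 2 by ring,
    show (q : ℂ) ^ 2 * ((q * E) ^ 2)⁻¹ = (E ^ 2)⁻¹ by field_simp, h₁, h₂,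
    show (E ^ 2)⁻¹ * (q : ℂ) ^ 2 = (q : ℂ) ^ 2 * (E ^ 2)⁻¹ by ring]
  field_simp
  ring

lemma Kone_ne_zero_of_theta_ne_zero {u : ℂ} (h : theta q u ≠ 0) : Kone q ≠ 0 := by
  contrapose! h
  simp [theta, h]

lemma pi_mul_Ktwo_div_Kone (hK : Kone q ≠ 0) : Real.pi * Ktwo q / Kone q = -Real.log q := by
  rw [Ktwo]
  field_simp

lemma exp_pi_mul_Ktwo_div_Kone (hq0 : 0 < q) (hK : Kone q ≠ 0) :
    exp (Real.pi * Ktwo q / Kone q) = (q : ℂ)⁻¹ := by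
  rw [show (Real.pi * Ktwo q / Kone q : ℂ) = ((Real.pi * Ktwo q / Kone q : ℝ) : ℂ) by
      push_cast; ring,
    pi_mul_Ktwo_div_Kone hK, ofReal_neg, exp_neg, ← ofReal_exp, Real.exp_log hq0]

lemma Ktwo_ne_zero (hq0 : 0 < q) (hq1 : q < 1) (hK : Kone q ≠ 0) : Ktwo q ≠ 0 := by
  rw [Ktwo]
  exact mul_ne_zero (neg_ne_zero.2 (div_ne_zero hK Real.pi_ne_zero)) (Real.log_neg hq0 hq1).ne

lemma theta_add_two_Kone (hq0 : 0 < q) (hq1 : q < 1) (hK : Kone q ≠ 0) (u : ℂ) :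
    theta q (u + 2 * Kone q) = -theta q u := by
  have hKc : (Kone q : ℂ) ≠ 0 := by exact_mod_cast hK
  have hshift : (Real.pi : ℂ) * (u + 2 * Kone q) / (2 * Kone q) * I =
      Real.pi * u / (2 * Kone q) * I + Real.pi * I := by
    field_simp
  rw [theta_eq_thetaProd hq0 hq1, theta_eq_thetaProd hq0 hq1, hshift, exp_add, exp_pi_mul_I,
    mul_neg_one, thetaProd_neg]

lemma theta_add_two_I_Ktwo (hq0 : 0 < q) (hq1 : q < 1) (hK : Kone q ≠ 0) (u : ℂ) :
    theta q (u + 2 * I * Ktwo q) =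
      -(q : ℂ)⁻¹ * exp (-(I * Real.pi * u / Kone q)) * theta q u := by
  have hshift : (Real.pi : ℂ) * (u + 2 * I * Ktwo q) / (2 * Kone q) * I =
      Real.pi * u / (2 * Kone q) * I - Real.pi * Ktwo q / Kone q := by
    linear_combination (Real.pi * Ktwo q / Kone q : ℂ) * I_sq
  have hsq : exp (-(I * Real.pi * u / Kone q)) =
      (exp (Real.pi * u / (2 * Kone q) * I) ^ 2)⁻¹ := by
    rw [← exp_nat_mul, ← exp_neg]; push_cast; ring_nf
  rw [theta_eq_thetaProd hq0 hq1, theta_eq_thetaProd hq0 hq1, hshift, exp_sub,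
    exp_pi_mul_Ktwo_div_Kone hq0 hK, div_inv_eq_mul, mul_comm,
    thetaProd_ofReal_mul hq0 hq1 (exp_ne_zero _), hsq]

lemma theta_neg (u : ℂ) : theta q (-u) = -theta q u := by
  simp only [theta, mul_neg, neg_div, Complex.sin_neg, Complex.cos_neg]
  ring

lemma differentiable_theta (hq0 : 0 < q) (hq1 : q < 1) : Differentiable ℂ (theta q) := by
  have hQ := differentiable_qPochhammer (norm_ofReal_sq_lt_one hq0 hq1)
  rw [funext (theta_eq_thetaProd hq0 hq1)]
  simp only [thetaProd]
  fun_prop (disch := simp [exp_ne_zero])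

end theta

def quasiFactor (q : ℝ) (lam s : ℂ) : ℂ :=
  -(q : ℂ)⁻¹ * exp (-(I * Real.pi * lam / Kone q) * s)

section brak

variable {q : ℝ} {lam : ℂ}

lemma brak_add_period_one (hq0 : 0 < q) (hq1 : q < 1) (hK : Kone q ≠ 0) (hlam : lam ≠ 0)
    (s : ℂ) : brak q lam (s + 2 * Kone q / lam) = -brak q lam s := by
  rw [brak, brak, mul_add, mul_div_cancel₀ _ hlam, theta_add_two_Kone hq0 hq1 hK]

lemma brak_add_period_two (hq0 : 0 < q) (hq1 : q < 1) (hK : Kone q ≠ 0) (hlam : lam ≠ 0)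
    (s : ℂ) : brak q lam (s + 2 * I * Ktwo q / lam) = quasiFactor q lam s * brak q lam s := by
  rw [brak, brak, mul_add, mul_div_cancel₀ _ hlam, theta_add_two_I_Ktwo hq0 hq1 hK, quasiFactor]
  ring_nf

lemma brak_neg (s : ℂ) : brak q lam (-s) = -brak q lam s := by
  rw [brak, brak, mul_neg, theta_neg]

lemma differentiable_brak (hq0 : 0 < q) (hq1 : q < 1) : Differentiable ℂ (brak q lam) :=
  (differentiable_theta hq0 hq1).comp (differentiable_id.const_mul lam)

lemma prod_quasiFactor {ι : Type*} (s : Finset ι) (f : ι → ℂ) :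
    ∏ i ∈ s, quasiFactor q lam (f i) =
      (-(q : ℂ)⁻¹) ^ s.card * exp (-(I * Real.pi * lam / Kone q) * ∑ i ∈ s, f i) := by
  simp only [quasiFactor, Finset.prod_mul_distrib, Finset.prod_const, Finset.mul_sum, exp_sum]

end brak

lemma aSc_add_smul_e1 (ω12 : ℂ) (a : ℤ × ℤ) (k : ℤ) :
    aSc ω12 (a + k • e1) = aSc ω12 a + k := by
  simp only [aSc, e1, Prod.fst_add, Prod.snd_add, Prod.smul_mk, smul_eq_mul]; push_cast; ring

lemma aSc_add_e1 (ω12 : ℂ) (a : ℤ × ℤ) : aSc ω12 (a + e1) = aSc ω12 a + 1 := by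
  simpa using aSc_add_smul_e1 ω12 a 1

lemma aSc_add_e2 (ω12 : ℂ) (a : ℤ × ℤ) : aSc ω12 (a + e2) = aSc ω12 a + 1 := by
  simp only [aSc, e2, Prod.fst_add, Prod.snd_add]; push_cast; ring

def faceShift (ω12 : ℂ) (a b c : ℤ × ℤ) : ℂ :=
  if b = a + e2 then 1 else if c = a + e1 then aSc ω12 a else 0

section face

variable {q : ℝ} {lam : ℂ} (ω12 : ℂ) {a b c d : ℤ × ℤ}

lemma faceW_ne_zero_cases_of_eq_add_e2 {U t : ℂ} (hd : d = b + e2)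
    (h : faceW q lam ω12 a b c d U t ≠ 0) :
    b = a + e2 ∧ c = a + e2 ∨ b = a + e1 ∧ c = a + e2 ∨ b = a + e1 ∧ c = a + e1 := by
  subst hd
  unfold faceW at h
  split_ifs at h <;> simp_all [e1, e2, Prod.ext_iff]
  omega

lemma faceW_eq_mul_brak_faceShift (hd : d = b + e2) (U : ℂ) :
    ∃ C, ∀ t, faceW q lam ω12 a b c d U t = C * brak q lam (t - U + faceShift ω12 a b c) := by
  by_cases h : ∃ t, faceW q lam ω12 a b c d U t ≠ 0
  · obtain ⟨t₀, ht₀⟩ := h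
    subst hd
    rcases faceW_ne_zero_cases_of_eq_add_e2 ω12 rfl ht₀ with
      ⟨rfl, rfl⟩ | ⟨rfl, rfl⟩ | ⟨rfl, rfl⟩
    · refine ⟨(brak q lam 1)⁻¹, fun t => ?_⟩
      simp only [faceW, faceShift, e1, e2, add_right_inj, Prod.mk.injEq, zero_ne_one, one_ne_zero,
        and_self, false_and, ↓reduceIte]
      rw [show 1 - (U - t) = t - U + 1 by ring]; ring
    · refine ⟨-(brak q lam (-aSc ω12 a - 1) / (brak q lam 1 * brak q lam (-aSc ω12 a))),
        fun t => ?_⟩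
      simp only [faceW, faceShift, e1, e2, add_right_inj, add_left_inj, Prod.mk.injEq, zero_ne_one,
        one_ne_zero, and_self, and_true, and_false, ↓reduceIte, add_zero]
      rw [← neg_sub t U, brak_neg]; ring
    · refine ⟨(brak q lam (aSc ω12 a))⁻¹, fun t => ?_⟩
      simp only [faceW, faceShift, e1, e2, add_right_inj, add_left_inj, Prod.mk.injEq, zero_ne_one,
        one_ne_zero, and_self, and_true, and_false, ↓reduceIte]
      rw [show aSc ω12 a - (U - t) = t - U + aSc ω12 a by ring]; ring
  · push Not at h
    exact ⟨0, fun t => by rw [h t, zero_mul]⟩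

end face

def columnWeight (q : ℝ) (lam ω12 : ℂ) (N : ℕ) (S B : ℕ → ℤ × ℤ) (U : ℕ → ℂ) (t : ℂ) : ℂ :=
  ∏ i ∈ Finset.range N, faceW q lam ω12 (S i) (B i) (S (i + 1)) (B (i + 1)) (U i) t

section column

variable {q : ℝ} {lam : ℂ} (ω12 : ℂ) {N : ℕ} {S B : ℕ → ℤ × ℤ} {b : ℤ × ℤ}

lemma succ_eq_add_e2 {i : ℕ} (hB : ∀ i ≤ N, B i = b + (i : ℤ) • e2) (hi : i < N) :
    B (i + 1) = B i + e2 := by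
  rw [hB i hi.le, hB (i + 1) hi]; push_cast; rw [add_smul, one_smul, add_assoc]

/-- The sum telescopes: before the unique `+ê₁` step of the left column the shifts vanish, the
step itself contributes `aSc (S i)`, and each later row contributes `1`. -/
lemma sum_faceShift {U : ℕ → ℂ} {t : ℂ} (hB : ∀ i ≤ N, B i = b + (i : ℤ) • e2)
    (hS0 : S 0 = b - e1)
    (hne : ∀ i < N, faceW q lam ω12 (S i) (B i) (S (i + 1)) (B (i + 1)) (U i) t ≠ 0) :
    ∀ n ≤ N, ∑ i ∈ Finset.range n, faceShift ω12 (S i) (B i) (S (i + 1)) =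
      (aSc ω12 (S n) - 1) * ((S n).1 - b.1 + 1) := by
  intro n
  induction n with
  | zero => intro _; simp [hS0, e1]
  | succ n ih =>
    intro hn
    have hBn : (B n).1 = b.1 := by simp [hB n (by omega), e2]
    rw [Finset.sum_range_succ, ih (by omega)]
    rcases faceW_ne_zero_cases_of_eq_add_e2 ω12 (succ_eq_add_e2 hB hn) (hne n hn) with
      ⟨hb, hc⟩ | ⟨hb, hc⟩ | ⟨hb, hc⟩ <;>
      rw [hb, hc] <;> rw [hb] at hBn
    · have h1 : ((S n).1 : ℂ) = b.1 := by simpa [e2] using hBn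
      rw [aSc_add_e2]
      simp [faceShift, e2, h1]
    · have h1 : ((S n).1 : ℂ) = b.1 - 1 := by simp [e1, ← hBn]
      rw [aSc_add_e2]
      simp [faceShift, e1, e2, h1]
    · have h1 : ((S n).1 : ℂ) = b.1 - 1 := by simp [e1, ← hBn]
      rw [aSc_add_e1]
      simp [faceShift, e1, e2, h1]

lemma columnWeight_add_period_one (hq0 : 0 < q) (hq1 : q < 1) (hK : Kone q ≠ 0) (hlam : lam ≠ 0)
    (hB : ∀ i ≤ N, B i = b + (i : ℤ) • e2) (U : ℕ → ℂ) (t : ℂ) :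
    columnWeight q lam ω12 N S B U (t + 2 * Kone q / lam) =
      (-1) ^ N * columnWeight q lam ω12 N S B U t := by
  have hface : ∀ i ∈ Finset.range N,
      faceW q lam ω12 (S i) (B i) (S (i + 1)) (B (i + 1)) (U i) (t + 2 * Kone q / lam) =
        -1 * faceW q lam ω12 (S i) (B i) (S (i + 1)) (B (i + 1)) (U i) t := by
    intro i hi
    obtain ⟨C, hC⟩ :=
      faceW_eq_mul_brak_faceShift ω12 (succ_eq_add_e2 hB (Finset.mem_range.1 hi)) (U i)
    rw [hC, hC, add_sub_right_comm, add_right_comm, brak_add_period_one hq0 hq1 hK hlam]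
    ring
  rw [columnWeight, Finset.prod_congr rfl hface, Finset.prod_mul_distrib, Finset.prod_const,
    Finset.card_range, columnWeight]

lemma columnWeight_add_period_two (hq0 : 0 < q) (hq1 : q < 1) (hK : Kone q ≠ 0) (hlam : lam ≠ 0)
    (hB : ∀ i ≤ N, B i = b + (i : ℤ) • e2) (hS0 : S 0 = b - e1)
    (hSN : S N = b + ((N : ℤ) - 1) • e2) (U : ℕ → ℂ) (t : ℂ) :
    columnWeight q lam ω12 N S B U (t + 2 * I * Ktwo q / lam) =
      (-(q : ℂ)⁻¹) ^ N *
        exp (-(I * Real.pi * lam / Kone q) *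
          (N * t - ∑ i ∈ Finset.range N, U i + aSc ω12 b + N - 2)) *
        columnWeight q lam ω12 N S B U t := by
  have hface : ∀ i ∈ Finset.range N,
      faceW q lam ω12 (S i) (B i) (S (i + 1)) (B (i + 1)) (U i) (t + 2 * I * Ktwo q / lam) =
        quasiFactor q lam (t - U i + faceShift ω12 (S i) (B i) (S (i + 1))) *
          faceW q lam ω12 (S i) (B i) (S (i + 1)) (B (i + 1)) (U i) t := by
    intro i hi
    obtain ⟨C, hC⟩ :=
      faceW_eq_mul_brak_faceShift ω12 (succ_eq_add_e2 hB (Finset.mem_range.1 hi)) (U i)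
    rw [hC, hC, add_sub_right_comm, add_right_comm, brak_add_period_two hq0 hq1 hK hlam]
    ring
  rw [columnWeight, Finset.prod_congr rfl hface, Finset.prod_mul_distrib, prod_quasiFactor,
    ← columnWeight]
  rcases eq_or_ne (columnWeight q lam ω12 N S B U t) 0 with h | h
  · rw [h, mul_zero, mul_zero]
  have hne := Finset.prod_ne_zero_iff.1 h
  rw [Finset.sum_add_distrib, Finset.sum_sub_distrib,
    sum_faceShift ω12 hB hS0 (fun i hi => hne i (Finset.mem_range.2 hi)) N le_rfl, hSN,
    Finset.sum_const, Finset.card_range, nsmul_eq_mul]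
  congr 3
  simp only [aSc, e2, Prod.fst_add, Prod.snd_add, Prod.smul_fst, Prod.smul_snd, smul_eq_mul]
  push_cast
  ring

end column

def IsBoundaryConfig (M N : ℕ) (x : ℕ → ℕ) (a : ℤ × ℤ)
    (s : Fin (N + 1) × Fin (M + 1) → ℤ × ℤ) : Prop :=
  (∀ k : Fin (M + 1), s (0, k) = a + ((k : ℕ) : ℤ) • e1) ∧
    (∀ i : Fin (N + 1), s (i, 0) = a + ((i : ℕ) : ℤ) • e1) ∧
    (∀ i : Fin (N + 1), s (i, Fin.last M) = a + (M : ℤ) • e1 + ((i : ℕ) : ℤ) • e2) ∧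
    (∀ k : Fin (M + 1), s (Fin.last N, k) =
      a + ((N : ℤ) + ((k : ℕ) : ℤ) - (btmCount N x (k : ℕ) : ℤ)) • e1 +
        (btmCount N x (k : ℕ) : ℤ) • e2)

def configWeight (q : ℝ) (lam ω12 : ℂ) (M N : ℕ) (u v : ℕ → ℂ)
    (s : Fin (N + 1) × Fin (M + 1) → ℤ × ℤ) : ℂ :=
  ∏ i : Fin N, ∏ k : Fin M,
    faceW q lam ω12 (s (i.castSucc, k.castSucc)) (s (i.castSucc, k.succ))
      (s (i.succ, k.castSucc)) (s (i.succ, k.succ)) (u (N - (i : ℕ))) (v ((k : ℕ) + 1))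

section lattice

variable {q : ℝ} {lam ω12 : ℂ} {M N : ℕ} {u v : ℕ → ℂ} {x : ℕ → ℕ} {a : ℤ × ℤ}

lemma sum_range_sub_eq_sum_Icc {β : Type*} [AddCommMonoid β] (N : ℕ) (f : ℕ → β) :
    ∑ i ∈ Finset.range N, f (N - i) = ∑ j ∈ Finset.Icc 1 N, f j :=
  Finset.sum_nbij' (fun i => N - i) (fun j => N - j) (by simp; omega) (by simp; omega)
    (by simp; omega) (by simp; omega) (fun _ _ => rfl)

lemma btmCount_eq_sub_one {m : ℕ} (hN : 1 ≤ N)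
    (hxmono : ∀ j k, 1 ≤ j → j < k → k ≤ N → x j < x k) (hxN : x N = m + 1) :
    btmCount N x m = N - 1 := by
  have hfilter : (Finset.Icc 1 N).filter (fun j => x j ≤ m) = Finset.Icc 1 (N - 1) := by
    ext j
    simp only [Finset.mem_filter, Finset.mem_Icc]
    constructor
    · rintro ⟨⟨hj1, hjN⟩, hxj⟩
      refine ⟨hj1, Nat.le_sub_one_of_lt (lt_of_le_of_ne hjN ?_)⟩
      rintro rfl
      omega
    · rintro ⟨hj1, hjN⟩
      have := hxmono j N hj1 (by omega) le_rfl
      exact ⟨⟨hj1, by omega⟩, by omega⟩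
  rw [btmCount, hfilter, Nat.card_Icc, Nat.add_sub_cancel]

open scoped Classical in
lemma partW_eq_tsum : partW q lam ω12 M N u v x a =
    ∑' s, if IsBoundaryConfig M N x a s then configWeight q lam ω12 M N u v s else 0 := by
  unfold partW IsBoundaryConfig configWeight
  exact tsum_congr fun s => by congr

-- `(n : Fin (N + 1))` wraps around for `n > N`, but `columnWeight N` only reads `n ≤ N`.
open Fin.NatCast in
lemma configWeight_update_last {m : ℕ} (s : Fin (N + 1) × Fin (m + 2) → ℤ × ℤ) (w : ℂ) :
    configWeight q lam ω12 (m + 1) N u (Function.update v (m + 1) w) s =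
      configWeight q lam ω12 m N u v (fun p => s (p.1, p.2.castSucc)) *
        columnWeight q lam ω12 N (fun n => s ((n : Fin (N + 1)), (Fin.last m).castSucc))
          (fun n => s ((n : Fin (N + 1)), Fin.last (m + 1))) (fun i => u (N - i)) w := by
  simp only [configWeight, columnWeight]
  simp only [Fin.prod_univ_castSucc (n := m), Finset.prod_mul_distrib]
  refine congrArg₂ (· * ·) ?_ ?_
  · refine Finset.prod_congr rfl fun i _ => Finset.prod_congr rfl fun k _ => ?_
    rw [Fin.val_castSucc, Function.update_of_ne (by omega), Fin.succ_castSucc]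
  · rw [← Fin.prod_univ_eq_prod_range]
    simp [Fin.coe_eq_castSucc, Fin.coeSucc_eq_succ]

open Fin.NatCast in
lemma IsBoundaryConfig.right_column {s : Fin (N + 1) × Fin (M + 1) → ℤ × ℤ}
    (hs : IsBoundaryConfig M N x a s) (i : ℕ) (hi : i ≤ N) :
    s ((i : Fin (N + 1)), Fin.last M) = a + (M : ℤ) • e1 + (i : ℤ) • e2 := by
  rw [hs.2.2.1, Fin.val_cast_of_lt (by omega)]

open Fin.NatCast in
lemma IsBoundaryConfig.last_column_top {m : ℕ} {s : Fin (N + 1) × Fin (m + 2) → ℤ × ℤ}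
    (hs : IsBoundaryConfig (m + 1) N x a s) :
    s (((0 : ℕ) : Fin (N + 1)), (Fin.last m).castSucc) =
      a + ((m + 1 : ℕ) : ℤ) • e1 - e1 := by
  rw [Nat.cast_zero, hs.1, Fin.val_castSucc, Fin.val_last]
  push_cast
  rw [add_smul, one_smul, add_sub_assoc, add_sub_cancel_right]

open Fin.NatCast in
lemma IsBoundaryConfig.last_column_bottom {m : ℕ} {s : Fin (N + 1) × Fin (m + 2) → ℤ × ℤ}
    (hs : IsBoundaryConfig (m + 1) N x a s) (hN : 1 ≤ N)
    (hxmono : ∀ j k, 1 ≤ j → j < k → k ≤ N → x j < x k) (hxN : x N = m + 1) :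
    s ((N : Fin (N + 1)), (Fin.last m).castSucc) =
      a + ((m + 1 : ℕ) : ℤ) • e1 + ((N : ℤ) - 1) • e2 := by
  rw [Fin.natCast_eq_last, hs.2.2.2, Fin.val_castSucc, Fin.val_last,
    btmCount_eq_sub_one hN hxmono hxN, Nat.cast_sub hN]
  congr 3
  push_cast
  ring

variable (ω12) in
theorem partW_update_add_period_one (hq0 : 0 < q) (hq1 : q < 1) (hK : Kone q ≠ 0)
    (hlam : lam ≠ 0) (hM : 0 < M) (w : ℂ) :
    partW q lam ω12 M N u (Function.update v M (w + 2 * Kone q / lam)) x a =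
      (-1) ^ N * partW q lam ω12 M N u (Function.update v M w) x a := by
  obtain ⟨m, rfl⟩ : ∃ m, M = m + 1 := ⟨M - 1, by omega⟩
  rw [partW_eq_tsum, partW_eq_tsum, ← tsum_mul_left]
  refine tsum_congr fun s => ?_
  split_ifs with hs
  · rw [configWeight_update_last, configWeight_update_last,
      columnWeight_add_period_one ω12 hq0 hq1 hK hlam hs.right_column]
    ring
  · rw [mul_zero]

variable (ω12) in
theorem partW_update_add_period_two (hq0 : 0 < q) (hq1 : q < 1) (hK : Kone q ≠ 0)
    (hlam : lam ≠ 0) (hM : 0 < M) (hN : 1 ≤ N)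
    (hxmono : ∀ j k, 1 ≤ j → j < k → k ≤ N → x j < x k) (hxN : x N = M) (w : ℂ) :
    partW q lam ω12 M N u (Function.update v M (w + 2 * I * Ktwo q / lam)) x a =
      (-(q : ℂ)⁻¹) ^ N *
        exp (-(I * Real.pi * lam / Kone q) *
          (N * w - ∑ j ∈ Finset.Icc 1 N, u j + aSc ω12 a + N + M - 2)) *
        partW q lam ω12 M N u (Function.update v M w) x a := by
  obtain ⟨m, rfl⟩ : ∃ m, M = m + 1 := ⟨M - 1, by omega⟩
  rw [partW_eq_tsum, partW_eq_tsum, ← tsum_mul_left]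
  refine tsum_congr fun s => ?_
  split_ifs with hs
  · rw [configWeight_update_last, configWeight_update_last,
      columnWeight_add_period_two ω12 hq0 hq1 hK hlam hs.right_column hs.last_column_top
        (hs.last_column_bottom hN hxmono hxN),
      sum_range_sub_eq_sum_Icc, aSc_add_smul_e1]
    push_cast
    ring_nf
  · rw [mul_zero]

end lattice

section support

variable {q : ℝ} {lam ω12 : ℂ} {M N : ℕ} {u v : ℕ → ℂ} {x : ℕ → ℕ} {a : ℤ × ℤ}

lemma eq_add_e1_or_eq_add_e2_of_faceW_ne_zero {b c d : ℤ × ℤ} {U t : ℂ}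
    (h : faceW q lam ω12 a b c d U t ≠ 0) :
    c = a + e1 ∨ c = a + e2 := by
  unfold faceW at h
  split_ifs at h with h₁ h₂ h₃ h₄ h₅ h₆
  exacts [.inl h₁.2.1, .inr h₂.2.1, .inl h₃.2.1, .inr h₄.2.1, .inl h₅.2.1, .inr h₆.2.1,
    absurd rfl h]

/-- In a configuration of nonzero weight, `s (i, k)` is reached from `a` by `i + k` unit steps. -/
lemma IsBoundaryConfig.mem_piFinset {s : Fin (N + 1) × Fin (M + 1) → ℤ × ℤ}
    (hs : IsBoundaryConfig M N x a s) (hw : configWeight q lam ω12 M N u v s ≠ 0) :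
    s ∈ Fintype.piFinset fun _ => Finset.Icc a (a + ((M + N : ℤ), (M + N : ℤ))) := by
  have hface : ∀ (i : Fin N) (k : Fin M), faceW q lam ω12 (s (i.castSucc, k.castSucc))
      (s (i.castSucc, k.succ)) (s (i.succ, k.castSucc)) (s (i.succ, k.succ)) (u (N - i))
      (v (k + 1)) ≠ 0 := fun i k =>
    Finset.prod_ne_zero_iff.1 (Finset.prod_ne_zero_iff.1 hw i (Finset.mem_univ _)) k
      (Finset.mem_univ _)
  have hpath : ∀ (i : Fin (N + 1)) (k : Fin (M + 1)),
      a ≤ s (i, k) ∧ (s (i, k)).1 + (s (i, k)).2 = a.1 + a.2 + i + k := by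
    intro i
    induction i using Fin.induction with
    | zero =>
      intro k
      rw [hs.1 k, Prod.le_def]
      simp only [e1, Prod.fst_add, Prod.snd_add, Prod.smul_mk, smul_eq_mul, Fin.val_zero]
      omega
    | succ i ih =>
      intro k
      rcases Fin.eq_castSucc_or_eq_last k with ⟨k, rfl⟩ | rfl
      · obtain ⟨hle, hsum⟩ := ih k.castSucc
        rw [Prod.le_def] at hle ⊢
        rcases eq_add_e1_or_eq_add_e2_of_faceW_ne_zero (hface i k) with h | h <;>
          · rw [h]
            simp only [e1, e2, Prod.fst_add, Prod.snd_add, Fin.val_succ, Fin.val_castSucc]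
              at hsum ⊢
            omega
      · rw [hs.2.2.1, Prod.le_def]
        simp only [e1, e2, Prod.fst_add, Prod.snd_add, Prod.smul_mk, smul_eq_mul, Fin.val_last]
        omega
  rw [Fintype.mem_piFinset]
  rintro ⟨i, k⟩
  obtain ⟨hle, hsum⟩ := hpath i k
  rw [Finset.mem_Icc, Prod.le_def, Prod.le_def] at *
  have := i.is_le
  have := k.is_le
  simp only [Prod.fst_add, Prod.snd_add]
  omega

end support

section differentiable

variable {q : ℝ} {lam ω12 : ℂ} {M N : ℕ} {u v : ℕ → ℂ} {x : ℕ → ℕ} {a : ℤ × ℤ}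

lemma differentiable_faceW (hq0 : 0 < q) (hq1 : q < 1) (a b c d : ℤ × ℤ) (U : ℂ) :
    Differentiable ℂ (faceW q lam ω12 a b c d U) := by
  have := differentiable_brak (lam := lam) hq0 hq1
  unfold faceW
  split_ifs <;> fun_prop

lemma differentiable_configWeight_update (hq0 : 0 < q) (hq1 : q < 1)
    (s : Fin (N + 1) × Fin (M + 1) → ℤ × ℤ) :
    Differentiable ℂ fun w => configWeight q lam ω12 M N u (Function.update v M w) s := by
  refine Differentiable.fun_finsetProd fun i _ => Differentiable.fun_finsetProd fun k _ => ?_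
  refine (differentiable_faceW hq0 hq1 _ _ _ _ _).comp ?_
  by_cases hk : (k : ℕ) + 1 = M
  · simp only [hk, Function.update_self]
    exact differentiable_id
  · simp only [Function.update_of_ne hk]
    exact differentiable_const _

theorem differentiable_partW_update (hq0 : 0 < q) (hq1 : q < 1) :
    Differentiable ℂ fun w => partW q lam ω12 M N u (Function.update v M w) x a := by
  classical
  have hfinite : ∀ w, partW q lam ω12 M N u (Function.update v M w) x a =
      ∑ s ∈ Fintype.piFinset fun _ => Finset.Icc a (a + ((M + N : ℤ), (M + N : ℤ))),
        if IsBoundaryConfig M N x a s then configWeight q lam ω12 M N u (Function.update v M w) s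
        else 0 := by
    intro w
    rw [partW_eq_tsum]
    refine tsum_eq_sum fun s hs => ?_
    split_ifs with hb
    · by_contra h
      exact hs (hb.mem_piFinset h)
    · rfl
  simp only [hfinite]
  refine Differentiable.fun_sum fun s _ => ?_
  split_ifs
  · exact differentiable_configWeight_update hq0 hq1 s
  · exact differentiable_const 0

end differentiable

theorem statement5_general (q : ℝ) (hq0 : 0 < q) (hq1 : q < 1) (lam : ℂ) (hlam : lam ≠ 0)
    (ω12 : ℂ) (M N : ℕ) (hN : 1 ≤ N) (hNM : N ≤ M)
    (u v : ℕ → ℂ) (x : ℕ → ℕ)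
    (hxmono : ∀ j k, 1 ≤ j → j < k → k ≤ N → x j < x k)
    (hxN : x N = M) (a : ℤ × ℤ)
    (hbr1 : brak q lam 1 ≠ 0)
    (φ : ℂ → ℂ)
    (hφ : ∀ y : ℂ, φ y =
      partW q lam ω12 M N u (Function.update v M (2 * (Kone q : ℂ) / lam * y)) x a) :
    partW q lam ω12 M N u (Function.update v M (v M + 2 * (Kone q : ℂ) / lam)) x a =
      (-1 : ℂ) ^ N * partW q lam ω12 M N u v x a ∧
    partW q lam ω12 M N u (Function.update v M (v M + 2 * Complex.I * (Ktwo q : ℂ) / lam)) x a =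
      (-(q : ℂ)⁻¹) ^ N *
        Complex.exp (-(Complex.I * (Real.pi : ℂ) * lam / (Kone q : ℂ)) *
          ((N : ℂ) * v M - (∑ j ∈ Finset.Icc 1 N, u j) + aSc ω12 a + (N : ℂ) + (M : ℂ) - 2)) *
        partW q lam ω12 M N u v x a ∧
    Differentiable ℂ φ ∧
    (∀ y : ℂ, φ (y + 1) = (-1 : ℂ) ^ N * φ y) ∧
    (∀ y : ℂ, φ (y + Complex.I * (Ktwo q : ℂ) / (Kone q : ℂ)) =
      ((-1 : ℂ) ^ N *
        Complex.exp (((Real.pi : ℂ) * lam * (Complex.I * (Ktwo q : ℂ) / (Kone q : ℂ)) / (Ktwo q : ℂ)) *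
          ((∑ j ∈ Finset.Icc 1 N, u j) - aSc ω12 a - (N : ℂ) - (M : ℂ) + 2))) *
        Complex.exp (-2 * (Real.pi : ℂ) * Complex.I * (N : ℂ) * y -
          (Real.pi : ℂ) * Complex.I * (N : ℂ) * (Complex.I * (Ktwo q : ℂ) / (Kone q : ℂ))) *
        φ y) := by
  have hK : Kone q ≠ 0 := Kone_ne_zero_of_theta_ne_zero hbr1
  have hKc : (Kone q : ℂ) ≠ 0 := by exact_mod_cast hK
  have hK₂ : (Ktwo q : ℂ) ≠ 0 := by exact_mod_cast Ktwo_ne_zero hq0 hq1 hK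
  have hM : 0 < M := by omega
  have hperiod_one := partW_update_add_period_one (u := u) (v := v) (x := x) (a := a) (N := N)
    ω12 hq0 hq1 hK hlam hM
  have hperiod_two := partW_update_add_period_two (u := u) (v := v) (a := a)
    ω12 hq0 hq1 hK hlam hM hN hxmono hxN
  refine ⟨by simpa using hperiod_one (v M), by simpa using hperiod_two (v M), ?_, fun y => ?_,
    fun y => ?_⟩
  · rw [funext hφ]
    exact (differentiable_partW_update hq0 hq1).comp (by fun_prop)
  · rw [hφ, hφ, mul_add, mul_one, hperiod_one]
  · have hy : 2 * (Kone q : ℂ) / lam * (y + I * Ktwo q / Kone q) =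
        2 * Kone q / lam * y + 2 * I * Ktwo q / lam := by
      field_simp
    rw [hφ, hφ, hy, hperiod_two]
    congr 1
    rw [neg_eq_neg_one_mul ((q : ℂ)⁻¹), mul_pow, ← exp_pi_mul_Ktwo_div_Kone hq0 hK, ← exp_nat_mul,
      mul_assoc, ← exp_add, mul_assoc ((-1 : ℂ) ^ N), ← exp_add]
    congr 2
    field_simp
    linear_combination (N * Ktwo q : ℂ) * I_sq

/-- if `x_N = M`, the partition function `W_{M,N}`, regarded as a function of
`v_M`, satisfies the two quasi-periodicities, and consequently, as a function of
`y_M = (λ/(2K₁)) v_M` it is an elliptic polynomial in `Θ_N(χ)` with `τ = iK₂/K₁`,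
`χ(1) = (-1)^N` and `χ(τ) = (-1)^N exp((πλτ/K₂)(Σ u_j - a₁₂ - N - M + 2))`. -/
theorem statement5 (q : ℝ) (hq0 : 0 < q) (hq1 : q < 1) (lam : ℂ) (hlam : lam ≠ 0)
    (ω12 : ℂ) (M N : ℕ) (hN : 1 ≤ N) (hNM : N ≤ M)
    (u v : ℕ → ℂ) (x : ℕ → ℕ)
    (hx1 : 1 ≤ x 1) (hxmono : ∀ j k, 1 ≤ j → j < k → k ≤ N → x j < x k)
    (hxN : x N = M) (a : ℤ × ℤ)
    (hbr1 : brak q lam 1 ≠ 0)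
    (hbrA : ∀ b : ℤ × ℤ, brak q lam (aSc ω12 b) ≠ 0)
    (hbrA' : ∀ b : ℤ × ℤ, brak q lam (-aSc ω12 b) ≠ 0)
    (φ : ℂ → ℂ)
    (hφ : ∀ y : ℂ, φ y =
      partW q lam ω12 M N u (Function.update v M (2 * (Kone q : ℂ) / lam * y)) x a) :
    partW q lam ω12 M N u (Function.update v M (v M + 2 * (Kone q : ℂ) / lam)) x a =
      (-1 : ℂ) ^ N * partW q lam ω12 M N u v x a ∧
    partW q lam ω12 M N u (Function.update v M (v M + 2 * Complex.I * (Ktwo q : ℂ) / lam)) x a =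
      (-(q : ℂ)⁻¹) ^ N *
        Complex.exp (-(Complex.I * (Real.pi : ℂ) * lam / (Kone q : ℂ)) *
          ((N : ℂ) * v M - (∑ j ∈ Finset.Icc 1 N, u j) + aSc ω12 a + (N : ℂ) + (M : ℂ) - 2)) *
        partW q lam ω12 M N u v x a ∧
    Differentiable ℂ φ ∧
    (∀ y : ℂ, φ (y + 1) = (-1 : ℂ) ^ N * φ y) ∧
    (∀ y : ℂ, φ (y + Complex.I * (Ktwo q : ℂ) / (Kone q : ℂ)) =
      ((-1 : ℂ) ^ N *
        Complex.exp (((Real.pi : ℂ) * lam * (Complex.I * (Ktwo q : ℂ) / (Kone q : ℂ)) / (Ktwo q : ℂ)) *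
          ((∑ j ∈ Finset.Icc 1 N, u j) - aSc ω12 a - (N : ℂ) - (M : ℂ) + 2))) *
        Complex.exp (-2 * (Real.pi : ℂ) * Complex.I * (N : ℂ) * y -
          (Real.pi : ℂ) * Complex.I * (N : ℂ) * (Complex.I * (Ktwo q : ℂ) / (Kone q : ℂ))) *
        φ y) :=
  statement5_general q hq0 hq1 lam hlam ω12 M N hN hNM u v x hxmono hxN a hbr1 φ hφ

end
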